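/- arXiv:1411.0936 — 3 statements merged into one kernel-verified Lean document; each statement's English description precedes it below -/
import Mathlib

section
/- Any 2×2 stochastic matrix T_{p,q} = [[1-p, q],[p, 1-q]] with 0 ≤ p, q ≤ 1 and p ≥ q can be represented on diagonal density matrices by a completely dephased unitary followed by a (swapped, if q > p) amplitude damping channel: choosing η = q - p and cos(2θ) = (1-p-q)/(1-|q-p|), the composite map Ξ_η ∘ Φ₁ ∘ U_θ sends diag(m, 1-m) to diag(m', 1-m') where m' = (1-p-q)m + q. -/
open Matrix Real

/-!
On diagonal inputs the rotation followed by complete dephasing is the stochastic matrix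
`[[c², s²], [s², c²]]` (with `c = cos θ`, `s = sin θ`), and the swapped amplitude damping channel
of strength `η` is `[[1 - η, 0], [η, 1]]`. Their product has top-left weight
`(1 - η) c² m + (1 - η) s² (1 - m)`, and the choice `(1 - η) cos 2θ = 1 - p - q`, `η = p - q`
turns it into `(1 - p - q) m + q`; the other diagonal entry follows from trace preservation.
-/

theorem rotation_conj_diagonal_apply_zero_zero (θ a b : ℝ) :
    (!![cos θ, sin θ; -sin θ, cos θ] * !![a, 0; 0, b] *
      (!![cos θ, sin θ; -sin θ, cos θ])ᵀ) 0 0 = cos θ ^ 2 * a + sin θ ^ 2 * b := by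
  simp [Matrix.mul_apply, Fin.sum_univ_two]
  ring

theorem rotation_conj_diagonal_apply_one_one (θ a b : ℝ) :
    (!![cos θ, sin θ; -sin θ, cos θ] * !![a, 0; 0, b] *
      (!![cos θ, sin θ; -sin θ, cos θ])ᵀ) 1 1 = sin θ ^ 2 * a + cos θ ^ 2 * b := by
  simp [Matrix.mul_apply, Fin.sum_univ_two]
  ring

theorem swappedAmplitudeDamping_diagonal {η : ℝ} (hη0 : 0 ≤ η) (hη1 : η ≤ 1) (a b : ℝ) :
    !![√(1 - η), 0; 0, 1] * !![a, 0; 0, b] * (!![√(1 - η), 0; 0, 1])ᵀ +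
      !![0, 0; √η, 0] * !![a, 0; 0, b] * (!![0, 0; √η, 0])ᵀ =
      !![(1 - η) * a, 0; 0, η * a + b] := by
  ext i j
  fin_cases i <;> fin_cases j <;> simp [vecMul, dotProduct]
  · linear_combination a * mul_self_sqrt (sub_nonneg.2 hη1)
  · linear_combination a * mul_self_sqrt hη0

theorem dephased_rotation_weight {p q θ : ℝ} (h : (1 - (p - q)) * cos (2 * θ) = 1 - p - q)
    (m : ℝ) : (1 - (p - q)) * (cos θ ^ 2 * m + sin θ ^ 2 * (1 - m)) = (1 - p - q) * m + q := by
  rw [sin_sq, cos_sq]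
  linear_combination (2 * m - 1) / 2 * h

theorem stmt_1_general (p q m θ : ℝ) (hp1 : p ≤ 1) (hq0 : 0 ≤ q)
    (hqp : q ≤ p)
    (hθ : Real.cos (2 * θ) = (1 - p - q) / (1 - (p - q))) :
    let U : Matrix (Fin 2) (Fin 2) ℝ := !![Real.cos θ, Real.sin θ; -Real.sin θ, Real.cos θ]
    let ρ : Matrix (Fin 2) (Fin 2) ℝ := !![m, 0; 0, 1 - m]
    -- complete dephasing of U ρ U†
    let D : Matrix (Fin 2) (Fin 2) ℝ := !![(U * ρ * Uᵀ) 0 0, 0; 0, (U * ρ * Uᵀ) 1 1]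
    -- swapped amplitude damping channel with strength |η| = p - q
    let L0 : Matrix (Fin 2) (Fin 2) ℝ := !![Real.sqrt (1 - (p - q)), 0; 0, 1]
    let L1 : Matrix (Fin 2) (Fin 2) ℝ := !![0, 0; Real.sqrt (p - q), 0]
    L0 * D * L0ᵀ + L1 * D * L1ᵀ =
      !![(1 - p - q) * m + q, 0; 0, 1 - ((1 - p - q) * m + q)] := by
  intro U ρ D L0 L1
  -- when `p - q = 1`, forcing `p = 1, q = 0`, both sides vanish despite the junk `0 / 0`
  have hcos : (1 - (p - q)) * cos (2 * θ) = 1 - p - q := by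
    rcases eq_or_ne (1 - (p - q)) 0 with h | h
    · rw [h, zero_mul]
      linarith
    · rw [hθ, mul_div_cancel₀ _ h]
  have hweight := dephased_rotation_weight hcos m
  have htrace : (p - q) * (cos θ ^ 2 * m + sin θ ^ 2 * (1 - m)) +
      (sin θ ^ 2 * m + cos θ ^ 2 * (1 - m)) = 1 - ((1 - p - q) * m + q) := by
    linear_combination sin_sq_add_cos_sq θ - hweight
  simp only [D, U, ρ, L0, L1, rotation_conj_diagonal_apply_zero_zero,
    rotation_conj_diagonal_apply_one_one,
    swappedAmplitudeDamping_diagonal (sub_nonneg.2 hqp) (by linarith)]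
  rw [hweight, htrace]

/-- any 2×2 stochastic matrix `T_{p,q}` with `p ≥ q` is represented on
diagonal density matrices by a completely dephased unitary followed by the
(swapped) amplitude damping channel with `|η| = p - q`: the composite map sends
`diag(m, 1-m)` to `diag(m', 1-m')` with `m' = (1-p-q)m + q`. -/
theorem stmt_1 (p q m θ : ℝ) (hp0 : 0 ≤ p) (hp1 : p ≤ 1) (hq0 : 0 ≤ q) (hq1 : q ≤ 1)
    (hqp : q ≤ p) (hm0 : 0 ≤ m) (hm1 : m ≤ 1)
    (hθ : Real.cos (2 * θ) = (1 - p - q) / (1 - (p - q))) :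
    let U : Matrix (Fin 2) (Fin 2) ℝ := !![Real.cos θ, Real.sin θ; -Real.sin θ, Real.cos θ]
    let ρ : Matrix (Fin 2) (Fin 2) ℝ := !![m, 0; 0, 1 - m]
    -- complete dephasing of U ρ U†
    let D : Matrix (Fin 2) (Fin 2) ℝ := !![(U * ρ * Uᵀ) 0 0, 0; 0, (U * ρ * Uᵀ) 1 1]
    -- swapped amplitude damping channel with strength |η| = p - q
    let L0 : Matrix (Fin 2) (Fin 2) ℝ := !![Real.sqrt (1 - (p - q)), 0; 0, 1]
    let L1 : Matrix (Fin 2) (Fin 2) ℝ := !![0, 0; Real.sqrt (p - q), 0]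
    L0 * D * L0ᵀ + L1 * D * L1ᵀ =
      !![(1 - p - q) * m + q, 0; 0, 1 - ((1 - p - q) * m + q)] :=
  stmt_1_general p q m θ hp1 hq0 hqp hθ
end

section
/- The three local Kraus operators K₀ = √((1-ξ/2)/(1-η)) [[√(1-η)√(1-p), √(1-η)√q e^{iφ₂}],[√q e^{iφ₁}, -√(1-p) e^{i(φ₁+φ₂)}]], K₁ = √((ξ/2)/(1-η)) [[√(1-η)√(1-p), √(1-η)√q e^{iφ₂}],[-√q e^{iφ₁}, √(1-p) e^{i(φ₁+φ₂)}]], and K₂ = √(η/(1-η)) [[0, 0],[√(1-p), √q e^{iφ₂}]] satisfy K₀†K₀ + K₁†K₁ + K₂†K₂ = I, given 0 ≤ ξ ≤ 2, 0 ≤ η < 1, and (1-p) + q = 1 - η. -/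
/-!
Write `W = [[√(1-p), √q e^{iφ₂}], [√q, -√(1-p) e^{iφ₂}]]`. Each Kraus operator factors as
`Kₖ = Dₖ W` with `D₀ = diag(a√(1-η), a e^{iφ₁})`, `D₁ = diag(b√(1-η), -b e^{iφ₁})` and
`D₂ = c E₁₀`, where `a, b, c` are the scalar prefactors. The rows of `W` are orthogonal of squared
norm `(1-p) + q = 1-η`, so `WᴴW = (1-η) I`, while `a² + b² = 1/(1-η)` and `c² = η/(1-η)` give
`∑ DₖᴴDₖ = I/(1-η)`. Hence `∑ KₖᴴKₖ = Wᴴ (∑ DₖᴴDₖ) W = I`.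
-/

open Matrix

theorem Matrix.sum_three_conjTranspose_mul_self_mul_right_eq_one {m n α : Type*}
    [Fintype m] [DecidableEq m] [Fintype n] [DecidableEq n] [CommSemiring α] [StarRing α]
    (D₀ D₁ D₂ : Matrix m m α) (W : Matrix m n α) (r s : α)
    (hD : D₀ᴴ * D₀ + D₁ᴴ * D₁ + D₂ᴴ * D₂ = r • 1) (hW : Wᴴ * W = s • 1) (hrs : r * s = 1) :
    (D₀ * W)ᴴ * (D₀ * W) + (D₁ * W)ᴴ * (D₁ * W) + (D₂ * W)ᴴ * (D₂ * W) = 1 := by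
  calc (D₀ * W)ᴴ * (D₀ * W) + (D₁ * W)ᴴ * (D₁ * W) + (D₂ * W)ᴴ * (D₂ * W)
      = Wᴴ * (D₀ᴴ * D₀ + D₁ᴴ * D₁ + D₂ᴴ * D₂) * W := by
        simp only [conjTranspose_mul, Matrix.mul_assoc, Matrix.mul_add, Matrix.add_mul]
    _ = 1 := by
        rw [hD, Matrix.mul_smul, Matrix.mul_one, Matrix.smul_mul, hW, smul_smul, hrs, one_smul]

theorem Complex.conj_mul_self_of_norm_eq_one {z : ℂ} (hz : ‖z‖ = 1) :
    starRingEnd ℂ z * z = 1 := by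
  rw [Complex.conj_mul', hz]; norm_num

theorem conjTranspose_mul_self_of_orthogonal_rows (s t : ℝ) (e : ℂ) (he : ‖e‖ = 1) :
    (!![(s : ℂ), t * e; t, -(s * e)])ᴴ * !![(s : ℂ), t * e; t, -(s * e)] =
      ((s ^ 2 + t ^ 2 : ℝ) : ℂ) • 1 := by
  have hee := Complex.conj_mul_self_of_norm_eq_one he
  ext i j
  fin_cases i <;> fin_cases j <;> simp [Matrix.mul_apply, Fin.sum_univ_two] <;>
    first | ring1 | linear_combination ((s : ℂ) ^ 2 + t ^ 2) * hee

theorem gram_sum_diagonal_weights (a b c u r : ℝ) (e : ℂ) (he : ‖e‖ = 1)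
    (h₀ : (a ^ 2 + b ^ 2) * u ^ 2 + c ^ 2 = r) (h₁ : a ^ 2 + b ^ 2 = r) :
    !![(a * u : ℂ), 0; 0, a * e]ᴴ * !![(a * u : ℂ), 0; 0, a * e] +
      !![(b * u : ℂ), 0; 0, -(b * e)]ᴴ * !![(b * u : ℂ), 0; 0, -(b * e)] +
      !![0, 0; (c : ℂ), 0]ᴴ * !![0, 0; (c : ℂ), 0] = (r : ℂ) • 1 := by
  have hee := Complex.conj_mul_self_of_norm_eq_one he
  have h₀' : ((a : ℂ) ^ 2 + b ^ 2) * u ^ 2 + c ^ 2 = r := by exact_mod_cast h₀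
  have h₁' : (a : ℂ) ^ 2 + b ^ 2 = r := by exact_mod_cast h₁
  ext i j
  fin_cases i <;> fin_cases j <;> simp [Matrix.mul_apply, Fin.sum_univ_two]
  · linear_combination h₀'
  · linear_combination ((a : ℂ) ^ 2 + b ^ 2) * hee + h₁'

theorem stmt_6_general (p q η ξ φ₁ φ₂ : ℝ) (hp1 : p ≤ 1) (hq0 : 0 ≤ q)
    (hξ0 : 0 ≤ ξ) (hξ2 : ξ ≤ 2) (hη0 : 0 ≤ η) (hη1 : η < 1)
    (hcons : (1 - p) + q = 1 - η) :
    let K0 : Matrix (Fin 2) (Fin 2) ℂ :=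
      (Real.sqrt ((1 - ξ / 2) / (1 - η)) : ℂ) •
        !![(Real.sqrt (1 - η) : ℂ) * (Real.sqrt (1 - p) : ℂ),
           (Real.sqrt (1 - η) : ℂ) * (Real.sqrt q : ℂ) * Complex.exp (Complex.I * φ₂);
           (Real.sqrt q : ℂ) * Complex.exp (Complex.I * φ₁),
           -(Real.sqrt (1 - p) : ℂ) * Complex.exp (Complex.I * (φ₁ + φ₂))]
    let K1 : Matrix (Fin 2) (Fin 2) ℂ :=
      (Real.sqrt ((ξ / 2) / (1 - η)) : ℂ) •
        !![(Real.sqrt (1 - η) : ℂ) * (Real.sqrt (1 - p) : ℂ),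
           (Real.sqrt (1 - η) : ℂ) * (Real.sqrt q : ℂ) * Complex.exp (Complex.I * φ₂);
           -(Real.sqrt q : ℂ) * Complex.exp (Complex.I * φ₁),
           (Real.sqrt (1 - p) : ℂ) * Complex.exp (Complex.I * (φ₁ + φ₂))]
    let K2 : Matrix (Fin 2) (Fin 2) ℂ :=
      (Real.sqrt (η / (1 - η)) : ℂ) •
        !![0, 0; (Real.sqrt (1 - p) : ℂ), (Real.sqrt q : ℂ) * Complex.exp (Complex.I * φ₂)]
    K0ᴴ * K0 + K1ᴴ * K1 + K2ᴴ * K2 = 1 := by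
  intro K0 K1 K2
  have hη : 0 < 1 - η := by linarith
  set a := Real.sqrt ((1 - ξ / 2) / (1 - η))
  set b := Real.sqrt ((ξ / 2) / (1 - η))
  set c := Real.sqrt (η / (1 - η))
  set u := Real.sqrt (1 - η)
  set e₁ := Complex.exp (Complex.I * φ₁)
  set W : Matrix (Fin 2) (Fin 2) ℂ :=
    !![(Real.sqrt (1 - p) : ℂ), Real.sqrt q * Complex.exp (Complex.I * φ₂);
      Real.sqrt q, -(Real.sqrt (1 - p) * Complex.exp (Complex.I * φ₂))]
  have hK0 : K0 = !![(a * u : ℂ), 0; 0, a * e₁] * W := by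
    ext i j; fin_cases i <;> fin_cases j <;> simp [K0, W, e₁, mul_add, Complex.exp_add] <;> ring
  have hK1 : K1 = !![(b * u : ℂ), 0; 0, -(b * e₁)] * W := by
    ext i j; fin_cases i <;> fin_cases j <;> simp [K1, W, e₁, mul_add, Complex.exp_add] <;> ring
  have hK2 : K2 = !![0, 0; (c : ℂ), 0] * W := by
    ext i j; fin_cases i <;> fin_cases j <;> simp [K2, W, c]
  have ha : a ^ 2 = (1 - ξ / 2) / (1 - η) := Real.sq_sqrt (div_nonneg (by linarith) hη.le)
  have hb : b ^ 2 = (ξ / 2) / (1 - η) := Real.sq_sqrt (div_nonneg (by linarith) hη.le)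
  have hc : c ^ 2 = η / (1 - η) := Real.sq_sqrt (div_nonneg hη0 hη.le)
  have hu : u ^ 2 = 1 - η := Real.sq_sqrt hη.le
  rw [hK0, hK1, hK2]
  refine sum_three_conjTranspose_mul_self_mul_right_eq_one _ _ _ W (((1 - η)⁻¹ : ℝ) : ℂ)
    ((1 - η : ℝ) : ℂ) ?_ ?_ ?_
  · exact gram_sum_diagonal_weights a b c u _ e₁ (Complex.norm_exp_I_mul_ofReal φ₁)
      (by rw [ha, hb, hc, hu]; field_simp; ring) (by rw [ha, hb]; field_simp; ring)
  · rw [conjTranspose_mul_self_of_orthogonal_rows _ _ _ (Complex.norm_exp_I_mul_ofReal φ₂),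
      Real.sq_sqrt (by linarith), Real.sq_sqrt hq0, hcons]
  · rw [← Complex.ofReal_mul, inv_mul_cancel₀ hη.ne', Complex.ofReal_one]

/-- the three local Kraus operators K₀, K₁, K₂ of the noisy QCA
satisfy the trace-preservation condition `K₀†K₀ + K₁†K₁ + K₂†K₂ = I`,
given `0 ≤ ξ ≤ 2`, `0 ≤ η < 1` and `(1-p) + q = 1 - η`. -/
theorem stmt_6 (p q η ξ φ₁ φ₂ : ℝ) (hp0 : 0 ≤ p) (hp1 : p ≤ 1) (hq0 : 0 ≤ q) (hq1 : q ≤ 1)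
    (hξ0 : 0 ≤ ξ) (hξ2 : ξ ≤ 2) (hη0 : 0 ≤ η) (hη1 : η < 1)
    (hcons : (1 - p) + q = 1 - η) :
    let K0 : Matrix (Fin 2) (Fin 2) ℂ :=
      (Real.sqrt ((1 - ξ / 2) / (1 - η)) : ℂ) •
        !![(Real.sqrt (1 - η) : ℂ) * (Real.sqrt (1 - p) : ℂ),
           (Real.sqrt (1 - η) : ℂ) * (Real.sqrt q : ℂ) * Complex.exp (Complex.I * φ₂);
           (Real.sqrt q : ℂ) * Complex.exp (Complex.I * φ₁),
           -(Real.sqrt (1 - p) : ℂ) * Complex.exp (Complex.I * (φ₁ + φ₂))]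
    let K1 : Matrix (Fin 2) (Fin 2) ℂ :=
      (Real.sqrt ((ξ / 2) / (1 - η)) : ℂ) •
        !![(Real.sqrt (1 - η) : ℂ) * (Real.sqrt (1 - p) : ℂ),
           (Real.sqrt (1 - η) : ℂ) * (Real.sqrt q : ℂ) * Complex.exp (Complex.I * φ₂);
           -(Real.sqrt q : ℂ) * Complex.exp (Complex.I * φ₁),
           (Real.sqrt (1 - p) : ℂ) * Complex.exp (Complex.I * (φ₁ + φ₂))]
    let K2 : Matrix (Fin 2) (Fin 2) ℂ :=
      (Real.sqrt (η / (1 - η)) : ℂ) •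
        !![0, 0; (Real.sqrt (1 - p) : ℂ), (Real.sqrt q : ℂ) * Complex.exp (Complex.I * φ₂)]
    K0ᴴ * K0 + K1ᴴ * K1 + K2ᴴ * K2 = 1 :=
  stmt_6_general p q η ξ φ₁ φ₂ hp1 hq0 hξ0 hξ2 hη0 hη1 hcons
end

section
/- In the swap regime with |c₀| = 1 (i.e., {z_μ} = (1,0,0)), the composition in the previous setting achieves perfect state transfer: if the initial global state encodes the pure qubit state α|0⟩ + β|1⟩ at site 1 (ρ₀₀ = |α|², ρ₁₁ = |β|², ρ₀₁ = αβ̄-type coherence) then after the evolution the reduced state of site 3 is exactly |ψ⟩⟨ψ| with ψ = α|0⟩ + β|1⟩, giving fidelity 1. -/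
/-!
With `{z_μ} = (1,0,0)` both Kraus families have a single nonzero member, and that member is a
permutation matrix: the even layer swaps the basis states `1 ↔ 2`, the odd layer `2 ↔ 3`.
Conjugating by a permutation matrix permutes rows and columns, so the step carries the
excitation `|1⟩` of site 1 to `|3⟩` of site 3 and leaves `|0⟩` fixed; the reduced state of
site 3 is then read off entrywise.
-/

open Matrix

theorem Matrix.sum_mul_mul_conjTranspose_eq_single {ι n R : Type*} [Fintype ι] [Fintype n]
    [Semiring R] [StarRing R] (K : ι → Matrix n n R) (i : ι) (hK : ∀ j ≠ i, K j = 0)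
    (ρ : Matrix n n R) :
    ∑ j, K j * ρ * (K j)ᴴ = K i * ρ * (K i)ᴴ :=
  Finset.sum_eq_single_of_mem i (Finset.mem_univ i) fun j _ hj => by simp [hK j hj]

theorem Matrix.permMatrix_mul_mul_conjTranspose {n R : Type*} [Fintype n] [DecidableEq n]
    [NonAssocSemiring R] [StarRing R] (σ : Equiv.Perm n) (ρ : Matrix n n R) :
    σ.permMatrix R * ρ * (σ.permMatrix R)ᴴ = ρ.submatrix σ σ := by
  rw [conjTranspose_permMatrix, PEquiv.toMatrix_toPEquiv_mul, PEquiv.mul_toMatrix_toPEquiv,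
    submatrix_submatrix]
  rfl

theorem stmt_16_general (α β : ℂ) :
    let z : Fin 3 → ℂ := fun μ => if μ = 0 then 1 else 0
    let e : Fin 3 → ℂ := fun μ => if μ = 0 then 1 else 0
    let Keven : Fin 3 → Matrix (Fin 4) (Fin 4) ℂ := fun μ =>
      !![z μ, 0, 0, 0; 0, 0, e μ, 0; 0, e μ, 0, 0; 0, 0, 0, e μ]
    let Kodd : Fin 3 → Matrix (Fin 4) (Fin 4) ℂ := fun μ =>
      !![z μ, 0, 0, 0; 0, e μ, 0, 0; 0, 0, 0, e μ; 0, 0, e μ, 0]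
    -- initial pure state α|0⟩ + β|1⟩ (qubit state encoded at site 1)
    let ρ0 : Matrix (Fin 4) (Fin 4) ℂ :=
      !![α * star α, α * star β, 0, 0; β * star α, β * star β, 0, 0;
         0, 0, 0, 0; 0, 0, 0, 0]
    let ρ1 : Matrix (Fin 4) (Fin 4) ℂ :=
      ∑ ν, Kodd ν * (∑ μ, Keven μ * ρ0 * (Keven μ)ᴴ) * (Kodd ν)ᴴ
    -- reduced state of site 3
    let ρ3 : Matrix (Fin 2) (Fin 2) ℂ :=
      !![ρ1 0 0 + ρ1 1 1 + ρ1 2 2, ρ1 0 3; ρ1 3 0, ρ1 3 3]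
    ρ3 = !![α * star α, α * star β; β * star α, β * star β] := by
  intro z e Keven Kodd ρ0 ρ1 ρ3
  have hKeven : Keven 0 = (Equiv.swap (1 : Fin 4) 2).permMatrix ℂ := by
    ext i j; fin_cases i <;> fin_cases j <;> simp [Keven, z, e, Equiv.swap_apply_def]
  have hKodd : Kodd 0 = (Equiv.swap (2 : Fin 4) 3).permMatrix ℂ := by
    ext i j; fin_cases i <;> fin_cases j <;> simp [Kodd, z, e, Equiv.swap_apply_def]
  have hKeven_ne (μ : Fin 3) (hμ : μ ≠ 0) : Keven μ = 0 := by
    ext i j; fin_cases i <;> fin_cases j <;> simp [Keven, z, e, hμ]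
  have hKodd_ne (μ : Fin 3) (hμ : μ ≠ 0) : Kodd μ = 0 := by
    ext i j; fin_cases i <;> fin_cases j <;> simp [Kodd, z, e, hμ]
  have hρ1 : ρ1 = ρ0.submatrix (Equiv.swap (1 : Fin 4) 2 ∘ Equiv.swap 2 3)
      (Equiv.swap (1 : Fin 4) 2 ∘ Equiv.swap 2 3) := by
    simp only [ρ1, sum_mul_mul_conjTranspose_eq_single Keven 0 hKeven_ne,
      sum_mul_mul_conjTranspose_eq_single Kodd 0 hKodd_ne, hKeven, hKodd,
      permMatrix_mul_mul_conjTranspose, submatrix_submatrix]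
  ext i j
  fin_cases i <;> fin_cases j <;> simp [ρ3, hρ1, ρ0, Equiv.swap_apply_def]

/-- in the swap regime with `{z_μ} = (1,0,0)` the QCA achieves
perfect state transfer: if the initial global state encodes the pure qubit
state `α|0⟩ + β|1⟩` at site 1, then after one full step the reduced state of
site 3 (extracted by the 0⊕1-sector partial trace) is exactly `|ψ⟩⟨ψ|`. -/
theorem stmt_16 (α β : ℂ) (hnorm : ‖α‖ ^ 2 + ‖β‖ ^ 2 = 1) :
    let z : Fin 3 → ℂ := fun μ => if μ = 0 then 1 else 0
    let e : Fin 3 → ℂ := fun μ => if μ = 0 then 1 else 0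
    let Keven : Fin 3 → Matrix (Fin 4) (Fin 4) ℂ := fun μ =>
      !![z μ, 0, 0, 0; 0, 0, e μ, 0; 0, e μ, 0, 0; 0, 0, 0, e μ]
    let Kodd : Fin 3 → Matrix (Fin 4) (Fin 4) ℂ := fun μ =>
      !![z μ, 0, 0, 0; 0, e μ, 0, 0; 0, 0, 0, e μ; 0, 0, e μ, 0]
    -- initial pure state α|0⟩ + β|1⟩ (qubit state encoded at site 1)
    let ρ0 : Matrix (Fin 4) (Fin 4) ℂ :=
      !![α * star α, α * star β, 0, 0; β * star α, β * star β, 0, 0;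
         0, 0, 0, 0; 0, 0, 0, 0]
    let ρ1 : Matrix (Fin 4) (Fin 4) ℂ :=
      ∑ ν, Kodd ν * (∑ μ, Keven μ * ρ0 * (Keven μ)ᴴ) * (Kodd ν)ᴴ
    -- reduced state of site 3
    let ρ3 : Matrix (Fin 2) (Fin 2) ℂ :=
      !![ρ1 0 0 + ρ1 1 1 + ρ1 2 2, ρ1 0 3; ρ1 3 0, ρ1 3 3]
    ρ3 = !![α * star α, α * star β; β * star α, β * star β] :=
  stmt_16_general α β
end
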